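/- arXiv:1211.5455 — 2 statements merged into one kernel-verified Lean document; each statement's English description precedes it below -/
import Mathlib

section
/- Let W be a random variable taking values in ℕ = {1,2,...} with probability generating function ρ(s) = E[s^W]. Then α*_ρ = 0 if and only if P[W = 1] > 0. -/
open Filter Topology Set

/-- The probability generating function `ρ(s) = E[s^W]` of an `ℕ`-valued random
variable `W` with probability mass function `p`. -/
noncomputable def rho (p : ℕ → ℝ) (s : ℝ) : ℝ := ∑' k, p k * s ^ k

/-- The exponential growth rate `F_ρ(α)`, with the convention `0^0 = 1`
(which holds for `Real.rpow`). -/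
noncomputable def Ffun (p : ℕ → ℝ) (α : ℝ) : ℝ :=
  Real.log (sSup ((fun γ : ℝ =>
    (1 + rho p (1 - 2 * γ)) ^ α / (2 * γ ^ γ * (1 - γ) ^ (1 - γ))) '' Set.Icc 0 (1/2)))

/-- The threshold `α*_ρ = inf {α ≥ 0 : F_ρ(α) > 0}`. -/
noncomputable def alphaStar (p : ℕ → ℝ) : ℝ := sInf {α : ℝ | 0 ≤ α ∧ 0 < Ffun p α}

/-!
Write `x = 1 - 2γ` and let `h` be the binary entropy. The denominator equals
`exp (log 2 - h γ)`, and `x² / 2 ≤ log 2 - h γ ≤ x²`.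

If `P[W = 1] = 0` then `ρ(x) ≤ x²`, so for `α ≤ 1/2` the numerator is at most
`(1 + x²)^α ≤ exp (x² / 2)`: every ratio is at most `1`, `F_ρ(α) ≤ 0`, and `α*_ρ ≥ 1/2`.

If `q = P[W = 1] > 0` then `ρ(x) ≥ q x`, so near `γ = 1/2` the numerator grows linearly in `x`
while the denominator only grows quadratically: `F_ρ(α) > 0` for every `α ∈ (0, 1]`.
-/

namespace Real

lemma two_mul_le_log_one_add_sub_log_one_sub {x : ℝ} (h0 : 0 ≤ x) (h1 : x < 1) :
    2 * x ≤ log (1 + x) - log (1 - x) := by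
  have hsum := hasSum_log_sub_log_of_abs_lt_one (abs_lt.2 ⟨by linarith, h1⟩)
  simpa using le_hasSum hsum 0 fun k _ => by positivity

lemma rpow_self_eq_exp_mul_log {x : ℝ} (hx : 0 ≤ x) : x ^ x = exp (x * log x) := by
  rcases hx.eq_or_lt with rfl | hx
  · simp
  · rw [rpow_def_of_pos hx, mul_comm]

lemma two_mul_rpow_self_mul_one_sub_rpow_self {γ : ℝ} (h0 : 0 ≤ γ) (h1 : γ ≤ 1) :
    2 * γ ^ γ * (1 - γ) ^ (1 - γ) = exp (log 2 - binEntropy γ) := by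
  rw [rpow_self_eq_exp_mul_log h0, rpow_self_eq_exp_mul_log (sub_nonneg.2 h1), binEntropy,
    log_inv, log_inv, ← exp_log (two_pos : (0:ℝ) < 2), ← exp_add, ← exp_add, log_exp]
  ring_nf

lemma log_two_sub_binEntropy_le {γ : ℝ} (h0 : 0 ≤ γ) (h1 : γ ≤ 1) :
    log 2 - binEntropy γ ≤ (1 - 2 * γ) ^ 2 := by
  have key : ∀ y : ℝ, 0 ≤ y → y * (log 2 + log y) ≤ y * (2 * y - 1) := by
    intro y hy
    rcases hy.eq_or_lt with rfl | hy
    · simp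
    · rw [← log_mul two_ne_zero hy.ne']
      have := log_le_sub_one_of_pos (by positivity : 0 < 2 * y)
      exact mul_le_mul_of_nonneg_left (by linarith) hy.le
  have := key γ h0
  have := key (1 - γ) (by linarith)
  rw [binEntropy, log_inv, log_inv]
  nlinarith

lemma le_log_two_sub_binEntropy_of_le_half {γ : ℝ} (h0 : 0 ≤ γ) (h1 : γ ≤ 1 / 2) :
    (1 - 2 * γ) ^ 2 / 2 ≤ log 2 - binEntropy γ := by
  set f : ℝ → ℝ := fun t => log 2 - binEntropy t - (1 - 2 * t) ^ 2 / 2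
  have hanti : AntitoneOn f (Icc 0 (1 / 2)) := by
    refine antitoneOn_of_hasDerivWithinAt_nonpos (convex_Icc _ _) (by fun_prop)
      (f' := fun t => 2 * (1 - 2 * t) - (log (1 - t) - log t)) (fun t ht => ?_) (fun t ht => ?_)
    · rw [interior_Icc] at ht
      have hd := ((hasDerivAt_const t (log 2)).sub
        (hasDerivAt_binEntropy ht.1.ne' (by linarith [ht.2]))).sub
        (((hasDerivAt_id t).const_mul 2).const_sub 1 |>.pow 2 |>.div_const 2)
      exact (hd.congr_deriv (by simp only [id]; push_cast; ring)).hasDerivWithinAt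
    · rw [interior_Icc] at ht
      obtain ⟨ht0, ht1⟩ := ht
      have h := two_mul_le_log_one_add_sub_log_one_sub (x := 1 - 2 * t) (by linarith) (by linarith)
      rw [show 1 + (1 - 2 * t) = 2 * (1 - t) by ring, show 1 - (1 - 2 * t) = 2 * t by ring,
        log_mul two_ne_zero (by linarith), log_mul two_ne_zero ht0.ne'] at h
      linarith
  have := hanti ⟨h0, h1⟩ ⟨by norm_num, le_rfl⟩ h1
  simp only [f, one_div, binEntropy_two_inv] at this
  linarith

lemma le_log_two_sub_binEntropy {γ : ℝ} (h0 : 0 ≤ γ) (h1 : γ ≤ 1) :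
    (1 - 2 * γ) ^ 2 / 2 ≤ log 2 - binEntropy γ := by
  rcases le_total γ (1 / 2) with h | h
  · exact le_log_two_sub_binEntropy_of_le_half h0 h
  · have := le_log_two_sub_binEntropy_of_le_half (γ := 1 - γ) (by linarith) (by linarith)
    rw [binEntropy_one_sub] at this
    linarith

lemma half_le_log_one_add {t : ℝ} (h0 : 0 ≤ t) (h1 : t ≤ 1) : t / 2 ≤ log (1 + t) := by
  have h := one_sub_inv_le_log_of_pos (by linarith : 0 < 1 + t)
  have : t / 2 ≤ 1 - (1 + t)⁻¹ := by
    rw [← one_div, le_sub_iff_add_le, ← le_sub_iff_add_le', div_le_iff₀ (by linarith)]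
    nlinarith
  linarith

end Real

section GeneratingFunction

variable {p : ℕ → ℝ} {s : ℝ}

lemma summable_mul_pow (hpnn : ∀ k, 0 ≤ p k) (hp : Summable p) (hs0 : 0 ≤ s) (hs1 : s ≤ 1) :
    Summable fun k => p k * s ^ k :=
  hp.of_nonneg_of_le (fun k => mul_nonneg (hpnn k) (pow_nonneg hs0 k))
    fun k => mul_le_of_le_one_right (hpnn k) (pow_le_one₀ hs0 hs1)

lemma rho_nonneg (hpnn : ∀ k, 0 ≤ p k) (hs0 : 0 ≤ s) : 0 ≤ rho p s :=
  tsum_nonneg fun k => mul_nonneg (hpnn k) (pow_nonneg hs0 k)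

lemma rho_le_one (hpnn : ∀ k, 0 ≤ p k) (hp : HasSum p 1) (hs0 : 0 ≤ s) (hs1 : s ≤ 1) :
    rho p s ≤ 1 :=
  hasSum_le (fun k => mul_le_of_le_one_right (hpnn k) (pow_le_one₀ hs0 hs1))
    (summable_mul_pow hpnn hp.summable hs0 hs1).hasSum hp

lemma rho_one (hp : HasSum p 1) : rho p 1 = 1 := by
  simp [rho, hp.tsum_eq]

lemma mul_le_rho (hpnn : ∀ k, 0 ≤ p k) (hp : Summable p) (hs0 : 0 ≤ s) (hs1 : s ≤ 1) :
    p 1 * s ≤ rho p s := by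
  simpa [rho] using (summable_mul_pow hpnn hp hs0 hs1).le_tsum 1
    fun k _ => mul_nonneg (hpnn k) (pow_nonneg hs0 k)

lemma rho_le_sq (hpnn : ∀ k, 0 ≤ p k) (hp0 : p 0 = 0) (hp1 : p 1 = 0) (hp : HasSum p 1)
    (hs0 : 0 ≤ s) (hs1 : s ≤ 1) : rho p s ≤ s ^ 2 := by
  refine hasSum_le (fun k => ?_) (summable_mul_pow hpnn hp.summable hs0 hs1).hasSum
    (by simpa using hp.mul_right (s ^ 2))
  match k with
  | 0 => simp [hp0]
  | 1 => simp [hp1]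
  | n + 2 => exact mul_le_mul_of_nonneg_left (pow_le_pow_of_le_one hs0 hs1 (by omega)) (hpnn _)

end GeneratingFunction

noncomputable def growthRatio (p : ℕ → ℝ) (α γ : ℝ) : ℝ :=
  (1 + rho p (1 - 2 * γ)) ^ α / (2 * γ ^ γ * (1 - γ) ^ (1 - γ))

lemma Ffun_eq_log_sSup (p : ℕ → ℝ) (α : ℝ) :
    Ffun p α = Real.log (sSup (growthRatio p α '' Icc 0 (1 / 2))) := rfl

section GrowthRatio

open Real

variable {p : ℕ → ℝ} {α γ : ℝ}

lemma growthRatio_eq (hγ : γ ∈ Icc (0 : ℝ) (1 / 2)) :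
    growthRatio p α γ = (1 + rho p (1 - 2 * γ)) ^ α / exp (log 2 - binEntropy γ) := by
  rw [growthRatio, two_mul_rpow_self_mul_one_sub_rpow_self hγ.1 (by linarith [hγ.2])]

lemma growthRatio_nonneg (hpnn : ∀ k, 0 ≤ p k) (hγ : γ ∈ Icc (0 : ℝ) (1 / 2)) :
    0 ≤ growthRatio p α γ := by
  rw [growthRatio_eq hγ]
  have := rho_nonneg hpnn (s := 1 - 2 * γ) (by linarith [hγ.2])
  exact div_nonneg (rpow_nonneg (by linarith) _) (exp_pos _).le

lemma growthRatio_le_two_rpow (hpnn : ∀ k, 0 ≤ p k) (hp : HasSum p 1) (hα : 0 ≤ α)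
    (hγ : γ ∈ Icc (0 : ℝ) (1 / 2)) : growthRatio p α γ ≤ 2 ^ α := by
  have h0 := rho_nonneg hpnn (s := 1 - 2 * γ) (by linarith [hγ.2])
  have h1 := rho_le_one hpnn hp (s := 1 - 2 * γ) (by linarith [hγ.2]) (by linarith [hγ.1])
  rw [growthRatio_eq hγ]
  calc _ ≤ (1 + rho p (1 - 2 * γ)) ^ α :=
        div_le_self (rpow_nonneg (by linarith) _) (one_le_exp (sub_nonneg.2 binEntropy_le_log_two))
    _ ≤ 2 ^ α := rpow_le_rpow (by linarith) (by linarith) hα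

lemma bddAbove_growthRatio (hpnn : ∀ k, 0 ≤ p k) (hp : HasSum p 1) (hα : 0 ≤ α) :
    BddAbove (growthRatio p α '' Icc 0 (1 / 2)) :=
  ⟨2 ^ α, by rintro _ ⟨γ, hγ, rfl⟩; exact growthRatio_le_two_rpow hpnn hp hα hγ⟩

lemma Ffun_nonpos_of_forall_growthRatio_le_one (hpnn : ∀ k, 0 ≤ p k)
    (h : ∀ γ ∈ Icc (0 : ℝ) (1 / 2), growthRatio p α γ ≤ 1) : Ffun p α ≤ 0 := by
  rw [Ffun_eq_log_sSup]
  exact log_nonpos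
    (Real.sSup_nonneg (by rintro _ ⟨γ, hγ, rfl⟩; exact growthRatio_nonneg hpnn hγ))
    (csSup_le ((nonempty_Icc.2 (by norm_num)).image _) (by rintro _ ⟨γ, hγ, rfl⟩; exact h γ hγ))

lemma Ffun_pos_of_one_lt_growthRatio (hpnn : ∀ k, 0 ≤ p k) (hp : HasSum p 1) (hα : 0 ≤ α)
    (hγ : γ ∈ Icc (0 : ℝ) (1 / 2)) (h : 1 < growthRatio p α γ) : 0 < Ffun p α := by
  rw [Ffun_eq_log_sSup]
  exact log_pos (h.trans_le (le_csSup (bddAbove_growthRatio hpnn hp hα) (mem_image_of_mem _ hγ)))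

lemma growthRatio_le_one_of_p_one_eq_zero (hpnn : ∀ k, 0 ≤ p k) (hp0 : p 0 = 0) (hp1 : p 1 = 0)
    (hp : HasSum p 1) (hα0 : 0 ≤ α) (hα : α ≤ 1 / 2) (hγ : γ ∈ Icc (0 : ℝ) (1 / 2)) :
    growthRatio p α γ ≤ 1 := by
  rw [growthRatio_eq hγ, div_le_one (exp_pos _)]
  obtain ⟨hγ0, hγ1⟩ := hγ
  set x := 1 - 2 * γ
  have hx0 : 0 ≤ x := by linarith
  have hρ0 := rho_nonneg hpnn hx0
  have hρx := rho_le_sq hpnn hp0 hp1 hp hx0 (by linarith)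
  calc (1 + rho p x) ^ α ≤ (1 + x ^ 2) ^ α := rpow_le_rpow (by linarith) (by linarith) hα0
    _ ≤ exp (x ^ 2) ^ α := rpow_le_rpow (by positivity) (by linarith [add_one_le_exp (x ^ 2)]) hα0
    _ = exp (x ^ 2 * α) := (exp_mul _ _).symm
    _ ≤ exp (x ^ 2 / 2) := exp_le_exp.2 (by nlinarith [sq_nonneg x])
    _ ≤ exp (log 2 - binEntropy γ) := exp_le_exp.2 (le_log_two_sub_binEntropy hγ0 (by linarith))

lemma Ffun_two_pos (hpnn : ∀ k, 0 ≤ p k) (hp : HasSum p 1) : 0 < Ffun p 2 := by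
  refine Ffun_pos_of_one_lt_growthRatio hpnn hp (by norm_num) (γ := 0) (by norm_num) ?_
  rw [growthRatio_eq (by norm_num), mul_zero, sub_zero, rho_one hp, binEntropy_zero, sub_zero,
    exp_log two_pos, rpow_two]
  norm_num

/-- Near `γ = 1/2`, with `x = 1 - 2γ`, the numerator's logarithm gains at least
`α P[W = 1] x / 2` while the denominator's costs at most `x²`; take `x = α P[W = 1] / 4`. -/
lemma Ffun_pos_of_p_one_pos (hpnn : ∀ k, 0 ≤ p k) (hp : HasSum p 1) (hq : 0 < p 1)
    (hα0 : 0 < α) (hα1 : α ≤ 1) : 0 < Ffun p α := by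
  have hq1 : p 1 ≤ 1 := le_hasSum hp 1 fun k _ => hpnn k
  set q := p 1
  set x := α * q / 4 with hx
  have hx0 : 0 < x := by positivity
  have hx1 : x ≤ 1 / 4 := by rw [hx]; nlinarith
  have hqx : q * x ≤ 1 := by nlinarith
  have hρ := mul_le_rho hpnn hp.summable hx0.le (by linarith)
  have hγ : (1 - x) / 2 ∈ Icc (0 : ℝ) (1 / 2) := ⟨by linarith, by linarith⟩
  have hγx : 1 - 2 * ((1 - x) / 2) = x := by ring
  refine Ffun_pos_of_one_lt_growthRatio hpnn hp hα0.le hγ ?_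
  rw [growthRatio_eq hγ, hγx, one_lt_div (exp_pos _)]
  calc exp (log 2 - binEntropy ((1 - x) / 2)) ≤ exp (x ^ 2) := by
        refine exp_le_exp.2 ?_
        simpa [hγx] using log_two_sub_binEntropy_le (γ := (1 - x) / 2) hγ.1 (by linarith)
    _ < exp (q * x / 2 * α) := exp_lt_exp.2 (by rw [hx]; nlinarith)
    _ ≤ exp (log (1 + q * x) * α) :=
        exp_le_exp.2 (mul_le_mul_of_nonneg_right (half_le_log_one_add (by positivity) hqx) hα0.le)
    _ = (1 + q * x) ^ α := (rpow_def_of_pos (by positivity) _).symm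
    _ ≤ (1 + rho p x) ^ α := rpow_le_rpow (by positivity) (by linarith) hα0.le

end GrowthRatio

section Threshold

variable {p : ℕ → ℝ}

/-- `sInf ∅ = 0`, so the lower bound needs a witness `F_ρ(2) > 0`. -/
lemma half_le_alphaStar (hpnn : ∀ k, 0 ≤ p k) (hp0 : p 0 = 0) (hp1 : p 1 = 0)
    (hp : HasSum p 1) : 1 / 2 ≤ alphaStar p := by
  refine le_csInf ⟨2, by norm_num, Ffun_two_pos hpnn hp⟩ fun α ⟨hα0, hF⟩ => ?_
  by_contra! hα
  exact hF.not_ge <| Ffun_nonpos_of_forall_growthRatio_le_one hpnn fun γ hγ =>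
    growthRatio_le_one_of_p_one_eq_zero hpnn hp0 hp1 hp hα0 hα.le hγ

lemma alphaStar_eq_zero_of_p_one_pos (hpnn : ∀ k, 0 ≤ p k) (hp : HasSum p 1) (hq : 0 < p 1) :
    alphaStar p = 0 := by
  have hmem : ∀ α : ℝ, 0 < α → α ≤ 1 → α ∈ {α : ℝ | 0 ≤ α ∧ 0 < Ffun p α} :=
    fun α h0 h1 => ⟨h0.le, Ffun_pos_of_p_one_pos hpnn hp hq h0 h1⟩
  refine csInf_eq_of_forall_ge_of_forall_gt_exists_lt ⟨1, hmem 1 one_pos le_rfl⟩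
    (fun α hα => hα.1) fun w hw => ⟨min w 1 / 2, hmem _ (by positivity) ?_, ?_⟩
  · linarith [min_le_right w 1]
  · linarith [min_le_left w 1]

end Threshold

theorem stmt1 (p : ℕ → ℝ) (hpnn : ∀ k, 0 ≤ p k) (hp0 : p 0 = 0)
    (hpsum : ∑' k, p k = 1) :
    alphaStar p = 0 ↔ 0 < p 1 := by
  have hp : HasSum p 1 := by
    have hsum : Summable p := by
      by_contra h
      simp [tsum_eq_zero_of_not_summable h] at hpsum
    exact hpsum ▸ hsum.hasSum
  refine ⟨fun h => ?_, alphaStar_eq_zero_of_p_one_pos hpnn hp⟩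
  by_contra! hp1
  have := half_le_alphaStar hpnn hp0 (le_antisymm hp1 (hpnn 1)) hp
  linarith
end

section
/- Let W be a random variable taking values in ℕ with probability generating function ρ(s) = E[s^W], satisfying P[W ≥ 3] = 1 and E[W²] < ∞. Then ᾱ_ρ ≤ 1, where ᾱ_ρ = inf{α > α♯_ρ : ψ(g*(α)) < 0}, with ψ(x) = x + (1 + ρ(x)/ρ′(x) − x) log(1−x), h(x) = −log(1−x)/ρ′(x), α♯_ρ = inf_{x∈(0,1)} h(x), and g*(α) = sup{x ∈ (0,1) : h(x) ≤ α} (with the convention sup ∅ = 0). -/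
open Filter Topology

/-- `h(x) = -log(1-x)/ρ'(x)`. -/
noncomputable def hfun (p : ℕ → ℝ) (x : ℝ) : ℝ :=
  -Real.log (1 - x) / deriv (rho p) x

/-- `ψ(x) = x + (1 + ρ(x)/ρ'(x) - x) log(1-x)`. -/
noncomputable def psi (p : ℕ → ℝ) (x : ℝ) : ℝ :=
  x + (1 + rho p x / deriv (rho p) x - x) * Real.log (1 - x)

/-- `α♯_ρ = inf_{x ∈ (0,1)} h(x)`. -/
noncomputable def alphaSharp (p : ℕ → ℝ) : ℝ := sInf (hfun p '' Set.Ioo 0 1)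

/-- `g*(α) = sup {x ∈ (0,1) : h(x) ≤ α}`, with `sup ∅ = 0` (the convention for
`sSup` of the empty set in `ℝ`). -/
noncomputable def gstar (p : ℕ → ℝ) (α : ℝ) : ℝ :=
  sSup {x : ℝ | x ∈ Set.Ioo (0 : ℝ) 1 ∧ hfun p x ≤ α}

/-- `ᾱ_ρ = inf {α > α♯_ρ : ψ(g*(α)) < 0}`. -/
noncomputable def alphaBar (p : ℕ → ℝ) : ℝ :=
  sInf {α : ℝ | alphaSharp p < α ∧ psi p (gstar p α) < 0}

/-!
Fix `α > 1` and put `g = g*(α)`. On `(g, 1)` we have `h > α`, that is `α ρ' < -log (1 - x) = φ'`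
for `φ x = x + (1 - x) log (1 - x)`, so `φ - α ρ` is strictly increasing on `[g, 1]` and
`φ g - α ρ g < φ 1 - α ρ 1 = 1 - α`. Since `ψ = φ - ρ h` identically and `h g ≥ α` by continuity
of `h`, this gives `ψ g ≤ φ g - α ρ g < 1 - α < 0`. The same monotonicity with `α = 1`, `g = 0`
and `ρ 0 = 0` shows that `h ≤ 1` somewhere on `(0, 1)`, so `α♯ ≤ 1` and every `α > 1` belongs
to the set whose infimum is `ᾱ`.
-/

open Set

variable {p : ℕ → ℝ}

noncomputable def dRho (p : ℕ → ℝ) (x : ℝ) : ℝ := ∑' k, p k * ((k : ℝ) * x ^ (k - 1))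

lemma summable_natCast_mul_of_summable_sq (hp : ∀ k, 0 ≤ p k)
    (hp2 : Summable fun k : ℕ => (k : ℝ) ^ 2 * p k) : Summable fun k : ℕ => (k : ℝ) * p k :=
  hp2.of_nonneg_of_le (fun k => mul_nonneg k.cast_nonneg (hp k)) fun k =>
    mul_le_mul_of_nonneg_right (by
      rcases k.eq_zero_or_pos with rfl | hk
      · simp
      · exact le_self_pow₀ (by exact_mod_cast hk) two_ne_zero) (hp k)

lemma summable_of_tsum_eq_one (hsum : ∑' k, p k = 1) : Summable p := by
  by_contra h
  simp [tsum_eq_zero_of_not_summable h] at hsum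

lemma norm_mul_pow_le (hp : ∀ k, 0 ≤ p k) (n : ℕ) {y : ℝ} (hy : |y| ≤ 1) :
    ‖p n * y ^ n‖ ≤ p n := by
  rw [Real.norm_eq_abs, abs_mul, abs_of_nonneg (hp n), abs_pow]
  exact mul_le_of_le_one_right (hp n) (pow_le_one₀ (abs_nonneg y) hy)

lemma norm_mul_natCast_mul_pow_le (hp : ∀ k, 0 ≤ p k) (n : ℕ) {y : ℝ} (hy : |y| ≤ 1) :
    ‖p n * ((n : ℝ) * y ^ (n - 1))‖ ≤ n * p n := by
  rw [Real.norm_eq_abs, abs_mul, abs_mul, abs_of_nonneg (hp n), Nat.abs_cast, abs_pow,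
    mul_comm (n : ℝ) (p n)]
  exact mul_le_mul_of_nonneg_left (mul_le_of_le_one_right n.cast_nonneg
    (pow_le_one₀ (abs_nonneg y) hy)) (hp n)

lemma hasDerivAt_rho (hp : ∀ k, 0 ≤ p k) (hp1 : Summable fun k : ℕ => (k : ℝ) * p k)
    {x : ℝ} (hx : x ∈ Ioo (-1) 1) : HasDerivAt (rho p) (dRho p x) x :=
  hasDerivAt_tsum_of_isPreconnected hp1 isOpen_Ioo isPreconnected_Ioo
    (fun n y _ => (hasDerivAt_pow n y).const_mul (p n))
    (fun n y hy => norm_mul_natCast_mul_pow_le hp n (abs_lt.2 hy).le)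
    (y₀ := 0) (by norm_num)
    (summable_of_ne_finset_zero (s := {0}) fun k hk => by simp_all) hx

lemma deriv_rho (hp : ∀ k, 0 ≤ p k) (hp1 : Summable fun k : ℕ => (k : ℝ) * p k)
    {x : ℝ} (hx : x ∈ Ioo (-1) 1) : deriv (rho p) x = dRho p x :=
  (hasDerivAt_rho hp hp1 hx).deriv

lemma continuousOn_rho (hp : ∀ k, 0 ≤ p k) (hs : Summable p) :
    ContinuousOn (rho p) (Icc (-1) 1) :=
  continuousOn_tsum (fun n => (continuous_const.mul (continuous_pow n)).continuousOn) hs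
    fun n _ hy => norm_mul_pow_le hp n (abs_le.2 hy)

lemma continuousOn_dRho (hp : ∀ k, 0 ≤ p k) (hp1 : Summable fun k : ℕ => (k : ℝ) * p k) :
    ContinuousOn (dRho p) (Icc (-1) 1) :=
  continuousOn_tsum
    (fun _ => (continuous_const.mul (continuous_const.mul (continuous_pow _))).continuousOn) hp1
    fun n _ hy => norm_mul_natCast_mul_pow_le hp n (abs_le.2 hy)

lemma summable_dRho (hp : ∀ k, 0 ≤ p k) (hp1 : Summable fun k : ℕ => (k : ℝ) * p k)
    {x : ℝ} (hx : |x| ≤ 1) : Summable fun k : ℕ => p k * ((k : ℝ) * x ^ (k - 1)) :=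
  hp1.of_norm_bounded fun n => norm_mul_natCast_mul_pow_le hp n hx

lemma exists_pos_of_tsum_eq_one (hp : ∀ k, 0 ≤ p k) (hp0 : p 0 = 0) (hsum : ∑' k, p k = 1) :
    ∃ k, 0 < k ∧ 0 < p k := by
  by_contra! h
  have : p = 0 := funext fun k => by
    rcases k.eq_zero_or_pos with rfl | hk
    exacts [hp0, (h k hk).antisymm (hp k)]
  simp [this] at hsum

lemma deriv_rho_pos (hp : ∀ k, 0 ≤ p k) (hp1 : Summable fun k : ℕ => (k : ℝ) * p k)
    (hp0 : p 0 = 0) (hsum : ∑' k, p k = 1) {x : ℝ} (hx : x ∈ Ioo 0 1) :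
    0 < deriv (rho p) x := by
  obtain ⟨k, hk, hpk⟩ := exists_pos_of_tsum_eq_one hp hp0 hsum
  rw [deriv_rho hp hp1 ⟨by linarith [hx.1], hx.2⟩]
  exact (summable_dRho hp hp1 (abs_le.2 ⟨by linarith [hx.1], hx.2.le⟩)).tsum_pos
    (fun n => mul_nonneg (hp n) (mul_nonneg n.cast_nonneg (pow_nonneg hx.1.le _))) k
    (mul_pos hpk (mul_pos (by exact_mod_cast hk) (pow_pos hx.1 _)))

lemma deriv_rho_le (hp : ∀ k, 0 ≤ p k) (hp1 : Summable fun k : ℕ => (k : ℝ) * p k)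
    {x : ℝ} (hx : x ∈ Ioo 0 1) : deriv (rho p) x ≤ ∑' k : ℕ, (k : ℝ) * p k := by
  have hx' : |x| ≤ 1 := abs_le.2 ⟨by linarith [hx.1], hx.2.le⟩
  rw [deriv_rho hp hp1 ⟨by linarith [hx.1], hx.2⟩]
  exact (summable_dRho hp hp1 hx').tsum_le_tsum
    (fun n => (le_abs_self _).trans (norm_mul_natCast_mul_pow_le hp n hx')) hp1

lemma continuousOn_deriv_rho (hp : ∀ k, 0 ≤ p k) (hp1 : Summable fun k : ℕ => (k : ℝ) * p k) :
    ContinuousOn (deriv (rho p)) (Ioo (-1) 1) :=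
  ((continuousOn_dRho hp hp1).mono Ioo_subset_Icc_self).congr fun _ hx => deriv_rho hp hp1 hx

lemma rho_nonneg_s19 (hp : ∀ k, 0 ≤ p k) {x : ℝ} (hx : 0 ≤ x) : 0 ≤ rho p x :=
  tsum_nonneg fun n => mul_nonneg (hp n) (pow_nonneg hx n)

lemma rho_zero (p : ℕ → ℝ) : rho p 0 = p 0 := by
  rw [rho, tsum_eq_single 0 fun k hk => by simp [hk]]
  simp

lemma rho_one_s19 (p : ℕ → ℝ) : rho p 1 = ∑' k, p k := by
  simp [rho]

-- An antiderivative of `-log (1 - x)`; `phi 0 = 0` and, since `0 * log 0 = 0`, `phi 1 = 1`.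
noncomputable def phi (x : ℝ) : ℝ := x + (1 - x) * Real.log (1 - x)

lemma continuous_phi : Continuous phi :=
  continuous_id.add (Real.continuous_mul_log.comp (continuous_const.sub continuous_id))

lemma hasDerivAt_phi {x : ℝ} (hx : x < 1) : HasDerivAt phi (-Real.log (1 - x)) x := by
  have hx' : (1 : ℝ) - x ≠ 0 := sub_ne_zero.2 hx.ne'
  have h1 : HasDerivAt (fun y : ℝ => 1 - y) (-1) x := by
    simpa using (hasDerivAt_id x).const_sub 1
  exact ((hasDerivAt_id' x).add (h1.mul (h1.log hx'))).congr_deriv (by field_simp; ring)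

lemma phi_sub_mul_rho_lt (hp : ∀ k, 0 ≤ p k) (hp1 : Summable fun k : ℕ => (k : ℝ) * p k)
    (hsum : ∑' k, p k = 1) {α x₀ : ℝ} (hx₀ : 0 ≤ x₀) (hx₀1 : x₀ < 1)
    (hlt : ∀ x ∈ Ioo x₀ 1, α * deriv (rho p) x < -Real.log (1 - x)) :
    phi x₀ - α * rho p x₀ < 1 - α := by
  have hmono : StrictMonoOn (fun x => phi x - α * rho p x) (Icc x₀ 1) := by
    refine strictMonoOn_of_hasDerivWithinAt_pos (convex_Icc x₀ 1)
      (f' := fun x => -Real.log (1 - x) - α * deriv (rho p) x) ?_ ?_ ?_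
    · exact continuous_phi.continuousOn.sub (continuousOn_const.mul
        ((continuousOn_rho hp (summable_of_tsum_eq_one hsum)).mono
          (Icc_subset_Icc (by linarith) le_rfl)))
    · intro x hx
      rw [interior_Icc] at hx
      have hx' : x ∈ Ioo (-1) 1 := ⟨by linarith [hx.1], hx.2⟩
      exact ((hasDerivAt_phi hx.2).sub
        ((hasDerivAt_rho hp hp1 hx').differentiableAt.hasDerivAt.const_mul α)).hasDerivWithinAt
    · intro x hx
      rw [interior_Icc] at hx
      linarith [hlt x hx]
  simpa [phi, rho_one_s19, hsum] using hmono ⟨le_rfl, hx₀1.le⟩ ⟨hx₀1.le, le_rfl⟩ hx₀1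

lemma psi_eq_phi_sub_rho_mul_hfun (p : ℕ → ℝ) (x : ℝ) :
    psi p x = phi x - rho p x * hfun p x := by
  simp only [psi, phi, hfun]
  ring

lemma hfun_nonneg {x : ℝ} (hx : x ∈ Ioo 0 1) (hD : 0 ≤ deriv (rho p) x) : 0 ≤ hfun p x :=
  div_nonneg (neg_nonneg.2 (Real.log_nonpos (by linarith [hx.2]) (by linarith [hx.1]))) hD

lemma continuousOn_hfun (hDc : ContinuousOn (deriv (rho p)) (Ioo 0 1))
    (hD : ∀ x ∈ Ioo (0 : ℝ) 1, deriv (rho p) x ≠ 0) : ContinuousOn (hfun p) (Ioo 0 1) :=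
  ((continuousOn_const.sub continuousOn_id).log fun _ hx => sub_ne_zero.2 hx.2.ne').neg.div hDc hD

lemma exists_hfun_le_one (hp : ∀ k, 0 ≤ p k) (hp1 : Summable fun k : ℕ => (k : ℝ) * p k)
    (hp0 : p 0 = 0) (hsum : ∑' k, p k = 1) : ∃ x ∈ Ioo (0 : ℝ) 1, hfun p x ≤ 1 := by
  by_contra! h
  have := phi_sub_mul_rho_lt hp hp1 hsum le_rfl zero_lt_one fun x hx =>
    (lt_div_iff₀ (deriv_rho_pos hp hp1 hp0 hsum hx)).1 (h x hx)
  simp [phi, rho_zero, hp0] at this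

lemma alphaSharp_le_one (hp : ∀ k, 0 ≤ p k) (hp1 : Summable fun k : ℕ => (k : ℝ) * p k)
    (hp0 : p 0 = 0) (hsum : ∑' k, p k = 1) : alphaSharp p ≤ 1 := by
  obtain ⟨x, hx, hle⟩ := exists_hfun_le_one hp hp1 hp0 hsum
  have hbdd : BddBelow (hfun p '' Ioo 0 1) :=
    ⟨0, forall_mem_image.2 fun y hy => hfun_nonneg hy (deriv_rho_pos hp hp1 hp0 hsum hy).le⟩
  exact (csInf_le hbdd (mem_image_of_mem _ hx)).trans hle

lemma bddAbove_hfun_sublevel (p : ℕ → ℝ) (α : ℝ) :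
    BddAbove {x : ℝ | x ∈ Ioo (0 : ℝ) 1 ∧ hfun p x ≤ α} :=
  ⟨1, fun _ hx => hx.1.2.le⟩

lemma gstar_nonneg {α : ℝ} : 0 ≤ gstar p α :=
  Real.sSup_nonneg fun _ hx => hx.1.1.le

lemma gstar_pos {α : ℝ} (hα : alphaSharp p < α) : 0 < gstar p α := by
  obtain ⟨_, ⟨x, hx, rfl⟩, hxα⟩ :=
    exists_lt_of_csInf_lt ((nonempty_Ioo.2 zero_lt_one).image _) hα
  exact hx.1.trans_le (le_csSup (bddAbove_hfun_sublevel p α) ⟨hx, hxα.le⟩)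

lemma gstar_lt_one {α m : ℝ} (hα : 0 ≤ α) (hD : ∀ x ∈ Ioo (0 : ℝ) 1, 0 < deriv (rho p) x)
    (hDm : ∀ x ∈ Ioo (0 : ℝ) 1, deriv (rho p) x ≤ m) : gstar p α < 1 := by
  have hm : 0 ≤ α * m := mul_nonneg hα ((hD _ ⟨one_half_pos, one_half_lt_one⟩).le.trans
    (hDm _ ⟨one_half_pos, one_half_lt_one⟩))
  -- `h x ≤ α` forces `-log (1 - x) ≤ α * m`, which keeps `x` away from `1`.
  have hle : gstar p α ≤ 1 - Real.exp (-(α * m)) := by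
    refine Real.sSup_le (fun x ⟨hx, hxα⟩ => ?_)
      (by linarith [Real.exp_le_one_iff.2 (neg_nonpos.2 hm)])
    have hlog : -Real.log (1 - x) ≤ α * m :=
      calc -Real.log (1 - x) ≤ α * deriv (rho p) x := (div_le_iff₀ (hD x hx)).1 hxα
        _ ≤ α * m := mul_le_mul_of_nonneg_left (hDm x hx) hα
    have := Real.exp_le_exp.2 (show -(α * m) ≤ Real.log (1 - x) by linarith)
    rw [Real.exp_log (by linarith [hx.2])] at this
    linarith
  linarith [Real.exp_pos (-(α * m))]

lemma lt_hfun_of_gstar_lt {α x : ℝ} (hx : x ∈ Ioo 0 1) (hgx : gstar p α < x) : α < hfun p x := by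
  by_contra! h
  exact hgx.not_ge (le_csSup (bddAbove_hfun_sublevel p α) ⟨hx, h⟩)

lemma le_hfun_gstar {α : ℝ} (hg : gstar p α < 1)
    (hcont : ContinuousWithinAt (hfun p) (Ioi (gstar p α)) (gstar p α)) :
    α ≤ hfun p (gstar p α) :=
  ge_of_tendsto hcont <| Filter.mem_of_superset (Ioo_mem_nhdsGT hg) fun _ hx =>
    (lt_hfun_of_gstar_lt ⟨gstar_nonneg.trans_lt hx.1, hx.2⟩ hx.1).le

lemma psi_gstar_neg (hp : ∀ k, 0 ≤ p k) (hp1 : Summable fun k : ℕ => (k : ℝ) * p k)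
    (hp0 : p 0 = 0) (hsum : ∑' k, p k = 1) {α : ℝ} (hα : alphaSharp p < α) (hα1 : 1 < α) :
    psi p (gstar p α) < 0 := by
  have hD : ∀ x ∈ Ioo (0 : ℝ) 1, 0 < deriv (rho p) x := fun _ hx =>
    deriv_rho_pos hp hp1 hp0 hsum hx
  set g := gstar p α
  have hg : g ∈ Ioo 0 1 :=
    ⟨gstar_pos hα, gstar_lt_one (by linarith) hD fun _ hx => deriv_rho_le hp hp1 hx⟩
  have hcont : ContinuousOn (hfun p) (Ioo 0 1) :=
    continuousOn_hfun ((continuousOn_deriv_rho hp hp1).mono (Ioo_subset_Ioo_left (by norm_num)))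
      fun x hx => (hD x hx).ne'
  have hαg : α ≤ hfun p g :=
    le_hfun_gstar hg.2 (hcont.continuousAt (isOpen_Ioo.mem_nhds hg)).continuousWithinAt
  have hphi : phi g - α * rho p g < 1 - α :=
    phi_sub_mul_rho_lt hp hp1 hsum hg.1.le hg.2 fun x hx =>
      (lt_div_iff₀ (hD x ⟨hg.1.trans hx.1, hx.2⟩)).1
        (lt_hfun_of_gstar_lt ⟨hg.1.trans hx.1, hx.2⟩ hx.1)
  calc psi p g = phi g - rho p g * hfun p g := psi_eq_phi_sub_rho_mul_hfun p g
    _ ≤ phi g - α * rho p g := by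
      rw [mul_comm α]
      exact sub_le_sub_left (mul_le_mul_of_nonneg_left hαg (rho_nonneg_s19 hp hg.1.le)) _
    _ < 0 := by linarith

theorem stmt19 (p : ℕ → ℝ) (hpnn : ∀ k, 0 ≤ p k)
    (hge3 : ∀ k, k < 3 → p k = 0) (hpsum : ∑' k, p k = 1)
    (hmom2 : Summable (fun k : ℕ => (k : ℝ) ^ 2 * p k)) :
    alphaBar p ≤ 1 := by
  have hp1 := summable_natCast_mul_of_summable_sq hpnn hmom2
  have hp0 : p 0 = 0 := hge3 0 (by norm_num)
  have hsharp := alphaSharp_le_one hpnn hp1 hp0 hpsum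
  have hS : Ioi 1 ⊆ {α | alphaSharp p < α ∧ psi p (gstar p α) < 0} := fun α hα =>
    ⟨hsharp.trans_lt hα, psi_gstar_neg hpnn hp1 hp0 hpsum (hsharp.trans_lt hα) hα⟩
  calc alphaBar p ≤ sInf (Ioi 1) := csInf_le_csInf ⟨alphaSharp p, fun _ h => h.1.le⟩ nonempty_Ioi hS
    _ = 1 := csInf_Ioi
end
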